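/- Fix λ > 0 and p < 1. The third derivative of the induced p-shrinkage penalty component g_p exists at every nonzero point, and satisfies g_p'''(w) > 0 for all w > 0 and g_p'''(w) < 0 for all w < 0; moreover the one-sided third derivatives at zero exist and satisfy g_p'''(0+) > 0 and g_p'''(0−) < 0. -/

import Mathlib

/-!
On `[λ, ∞)` the shrinkage function is `h(x) = x − λ^{2−p} x^{p−1}`, with `h(λ) = 0` and
`h' = 1 + (1 − p) λ^{2−p} x^{p−2} ≥ 1`; let `u` be its inverse. Since `f_p` is convex with
`f_p' = s_{λ,p}`, the supremum defining `f_p*(w)` for `w ≥ 0` is attained at `u(w)`, so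
`λ g_p(w) = u w − f_p(u) − w²/2`. Differentiating, `λ g_p' = u − w`, `λ g_p'' = 1/h'(u) − 1` and
`λ g_p''' = −h''(u)/h'(u)³ = (1 − p)(2 − p) λ^{2−p} u^{p−3}/h'(u)³ > 0`. Since `u` is 1-Lipschitz
with `u(0) = λ`, this expression is continuous up to `w = 0`. The statements for `w < 0` follow
because `g_p` is even, so `g_p'''` is odd.
-/

open MeasureTheory Filter
open scoped BigOperators

noncomputable section

/-- `l0 w` is the number of nonzero entries of `w`. -/
def l0 {n : ℕ} (w : Fin n → ℝ) : ℕ := (Finset.univ.filter fun i => w i ≠ 0).card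

/-- Euclidean (`ℓ²`) norm of a vector. -/
def l2 {k : ℕ} (v : Fin k → ℝ) : ℝ := Real.sqrt (∑ i, v i ^ 2)

/-- Restriction `h_T` of a vector to a finset `T` (zero outside `T`). -/
def restr {n : ℕ} (T : Finset (Fin n)) (h : Fin n → ℝ) : Fin n → ℝ :=
  fun i => if i ∈ T then h i else 0

/-- Unique Representation Property: every `m` columns of `A` are linearly independent. -/
def URP {m n : ℕ} (A : Matrix (Fin m) (Fin n) ℝ) : Prop :=
  ∀ S : Finset (Fin n), S.card = m →
    LinearIndependent ℝ (fun j : S => (fun i : Fin m => A i (j : Fin n)))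

/-- Conditions (I)-(II) on the penalty component `g`. -/
def PenaltyConds (g : ℝ → ℝ) : Prop :=
  g 0 = 0 ∧ (∀ w, g (-w) = g w) ∧ Continuous g ∧
    ((StrictMonoOn g (Set.Ioi 0) ∧ StrictConcaveOn ℝ (Set.Ioi 0) g) ∨
      (∃ γ : ℝ, 0 < γ ∧ StrictMonoOn g (Set.Ioc 0 γ) ∧
        StrictConcaveOn ℝ (Set.Ioc 0 γ) g ∧ ∀ w, γ ≤ w → g w = g γ))

/-- Spectral (`ℓ² → ℓ²` operator) norm of a matrix. -/
def specNorm {m n : ℕ} (A : Matrix (Fin m) (Fin n) ℝ) : ℝ :=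
  sSup {c | ∃ v : Fin n → ℝ, l2 v ≤ 1 ∧ c = l2 (A.mulVec v)}

/-- The `p`-shrinkage function `s_{λ,p}`. -/
def pshrinkFun (lam p t : ℝ) : ℝ :=
  if t ≤ 0 then 0 else max (t - lam ^ (2 - p) * t ^ (p - 1)) 0

/-- `f_p(x) = ∫₀ˣ s_{λ,p}(t) dt`. -/
def pf (lam p x : ℝ) : ℝ := ∫ t in (0 : ℝ)..x, pshrinkFun lam p t

/-- Legendre–Fenchel transform `f_p*(w) = sup_{x ≥ 0} (x·w − f_p(x))`. -/
def pfstar (lam p w : ℝ) : ℝ := sSup ((fun x => x * w - pf lam p x) '' Set.Ici 0)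

/-- The induced `p`-shrinkage penalty component `g_p`. -/
def gp (lam p w : ℝ) : ℝ := (pfstar lam p |w| - w ^ 2 / 2) / lam

/-- The induced `p`-shrinkage penalty `G_p`. -/
def Gp (lam p : ℝ) {n : ℕ} (w : Fin n → ℝ) : ℝ := ∑ i, gp lam p (w i)

/-- The `p`-shrinkage mapping `S_p`. -/
def Sp (lam p : ℝ) {n : ℕ} (x : Fin n → ℝ) : Fin n → ℝ :=
  fun i => pshrinkFun lam p |x i| * Real.sign (x i)

/-- The objective `F_p(x) = λ G_p(x) + ½‖Ax − b‖₂²`. -/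
def Fp (lam p : ℝ) {m n : ℕ} (A : Matrix (Fin m) (Fin n) ℝ) (b : Fin m → ℝ)
    (x : Fin n → ℝ) : ℝ :=
  lam * Gp lam p x + (1 / 2) * (l2 (A.mulVec x - b)) ^ 2

/-- Firm-thresholding penalty component. -/
def gfirm (μ w : ℝ) : ℝ := if |w| ≤ μ then |w| - w ^ 2 / (2 * μ) else μ / 2

/-- Firm-thresholding penalty. -/
def Gfirm (μ : ℝ) {n : ℕ} (w : Fin n → ℝ) : ℝ := ∑ i, gfirm μ (w i)

/-- The `m × m` submatrix `A_S` of the columns of `A` indexed by `S`. -/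
def colsub {m n : ℕ} (A : Matrix (Fin m) (Fin n) ℝ)
    (S : {S : Finset (Fin n) // S.card = m}) : Matrix (Fin m) (Fin m) ℝ :=
  Matrix.of fun i j => A i ((S.1.orderIsoOfFin S.2 j : Fin n))

/-- `α_S = ‖A_S⁻¹ b‖_{-∞}`. -/
def alphaS {m n : ℕ} (A : Matrix (Fin m) (Fin n) ℝ) (b : Fin m → ℝ)
    (S : {S : Finset (Fin n) // S.card = m}) : ℝ :=
  ⨅ i, |((colsub A S)⁻¹).mulVec b i|

/-- `β_S = ‖A_S⁻¹ b‖_∞`. -/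
def betaS {m n : ℕ} (A : Matrix (Fin m) (Fin n) ℝ) (b : Fin m → ℝ)
    (S : {S : Finset (Fin n) // S.card = m}) : ℝ :=
  ⨆ i, |((colsub A S)⁻¹).mulVec b i|

/-- `‖A_S⁻¹‖` (spectral norm). -/
def nrmInv {m n : ℕ} (A : Matrix (Fin m) (Fin n) ℝ)
    (S : {S : Finset (Fin n) // S.card = m}) : ℝ :=
  specNorm ((colsub A S)⁻¹)

open Set Topology

section IteratedDeriv

variable {𝕜 F : Type*} [NontriviallyNormedField 𝕜] [NormedAddCommGroup F] [NormedSpace 𝕜 F]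
  {f g g' : 𝕜 → F} {s : Set 𝕜} {n : ℕ}

theorem Function.Even.iteratedDeriv_neg (hf : f.Even) (n : ℕ) (x : 𝕜) :
    iteratedDeriv n f (-x) = (-1 : 𝕜) ^ n • iteratedDeriv n f x := by
  simpa [funext hf] using iteratedDeriv_comp_neg n f (-x)

theorem hasDerivAt_iteratedDeriv_of_eqOn (hs : IsOpen s) (hfg : EqOn (iteratedDeriv n f) g s)
    {x : 𝕜} (hx : x ∈ s) {y : F} (hg : HasDerivAt g y x) :
    HasDerivAt (iteratedDeriv n f) y x :=
  hg.congr_of_eventuallyEq (eventually_of_mem (hs.mem_nhds hx) hfg)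

theorem eqOn_iteratedDeriv_succ (hs : IsOpen s) (hfg : EqOn (iteratedDeriv n f) g s)
    (hg : ∀ x ∈ s, HasDerivAt g (g' x) x) : EqOn (iteratedDeriv (n + 1) f) g' s := fun x hx => by
  rw [iteratedDeriv_succ]
  exact (hasDerivAt_iteratedDeriv_of_eqOn hs hfg hx (hg x hx)).deriv

end IteratedDeriv

theorem Monotone.mul_sub_le_mul_sub_of_hasDerivAt {f s : ℝ → ℝ} (hs : Monotone s)
    (hf : ∀ x, HasDerivAt f (s x) x) (u x : ℝ) : x * s u - f x ≤ u * s u - f u := by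
  have hF : ∀ x, HasDerivAt (fun x => f x - x * s u) (s x - s u) x := fun x =>
    (hf x).sub (hasDerivAt_mul_const (s u))
  have hconv : ConvexOn ℝ univ fun x => f x - x * s u := by
    refine Monotone.convexOn_univ_of_deriv (fun x => (hF x).differentiableAt) ?_
    rw [funext fun x => (hF x).deriv]
    exact fun a b hab => sub_le_sub_right (hs hab) _
  have hmin := hconv.isMinOn_of_rightDeriv_eq_zero (by simp)
    (((hF u).hasDerivWithinAt.derivWithin (uniqueDiffWithinAt_Ioi u)).trans (sub_self _))
  have hx := isMinOn_iff.1 hmin x (mem_univ x)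
  linarith

section LowerInv

variable {h : ℝ → ℝ} {a : ℝ}

/-- The inverse of `h` on `[a, ∞)`, extended by `a` below `h a`. -/
def lowerInv (h : ℝ → ℝ) (a w : ℝ) : ℝ := sInf {x | a ≤ x ∧ w ≤ h x}

theorem lowerInv_of_le {w : ℝ} (hw : w ≤ h a) : lowerInv h a w = a :=
  IsLeast.csInf_eq ⟨⟨le_rfl, hw⟩, fun _ hx => hx.1⟩

theorem lowerInv_spec (hc : ContinuousOn h (Ici a))
    (hexp : ∀ x y, a ≤ x → x ≤ y → h x + (y - x) ≤ h y) {w : ℝ} (hw : h a ≤ w) :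
    a ≤ lowerInv h a w ∧ h (lowerInv h a w) = w := by
  have hb : a ≤ a + (w - h a) := by linarith
  obtain ⟨x, hx, hxw⟩ := intermediate_value_Icc hb (hc.mono Icc_subset_Ici_self)
    ⟨hw, by linarith [hexp a _ le_rfl hb]⟩
  have hleast : IsLeast {x | a ≤ x ∧ w ≤ h x} x := by
    refine ⟨⟨hx.1, hxw.ge⟩, fun y hy => ?_⟩
    by_contra! hyx
    linarith [hexp y x hy.1 hyx.le, hy.2]
  rw [lowerInv, hleast.csInf_eq]
  exact ⟨hx.1, hxw⟩

theorem le_lowerInv (hc : ContinuousOn h (Ici a))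
    (hexp : ∀ x y, a ≤ x → x ≤ y → h x + (y - x) ≤ h y) (w : ℝ) : a ≤ lowerInv h a w := by
  rcases le_total w (h a) with hw | hw
  · rw [lowerInv_of_le hw]
  · exact (lowerInv_spec hc hexp hw).1

theorem apply_lowerInv (hc : ContinuousOn h (Ici a))
    (hexp : ∀ x y, a ≤ x → x ≤ y → h x + (y - x) ≤ h y) (w : ℝ) :
    h (lowerInv h a w) = max w (h a) := by
  rcases le_total w (h a) with hw | hw
  · rw [lowerInv_of_le hw, max_eq_right hw]
  · rw [(lowerInv_spec hc hexp hw).2, max_eq_left hw]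

theorem lowerInv_le_and_sub_le (hc : ContinuousOn h (Ici a))
    (hexp : ∀ x y, a ≤ x → x ≤ y → h x + (y - x) ≤ h y) {w w' : ℝ} (hww : w ≤ w') :
    lowerInv h a w ≤ lowerInv h a w' ∧ lowerInv h a w' - lowerInv h a w ≤ w' - w := by
  have hx := apply_lowerInv hc hexp w
  have hy := apply_lowerInv hc hexp w'
  have hmax : max w' (h a) - max w (h a) ≤ w' - w :=
    (max_sub_max_le_max _ _ _ _).trans (by simp [hww])
  have hle : lowerInv h a w ≤ lowerInv h a w' := by
    by_contra! hlt
    linarith [hexp _ _ (le_lowerInv hc hexp w') hlt.le, max_le_max_right (h a) hww]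
  exact ⟨hle, by linarith [hexp _ _ (le_lowerInv hc hexp w) hle]⟩

theorem lipschitzWith_lowerInv (hc : ContinuousOn h (Ici a))
    (hexp : ∀ x y, a ≤ x → x ≤ y → h x + (y - x) ≤ h y) : LipschitzWith 1 (lowerInv h a) := by
  refine LipschitzWith.of_dist_le_mul fun w w' => ?_
  rw [NNReal.coe_one, one_mul, Real.dist_eq, Real.dist_eq, abs_le]
  rcases le_total w w' with hww | hww
  · have := lowerInv_le_and_sub_le hc hexp hww
    constructor <;> linarith [neg_abs_le (w - w'), abs_nonneg (w - w')]
  · have := lowerInv_le_and_sub_le hc hexp hww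
    constructor <;> linarith [le_abs_self (w - w'), abs_nonneg (w - w')]

end LowerInv

def pshrinkBranch (lam p x : ℝ) : ℝ := x - lam ^ (2 - p) * x ^ (p - 1)

def pshrinkBranchDeriv (lam p x : ℝ) : ℝ := 1 + (1 - p) * lam ^ (2 - p) * x ^ (p - 2)

def pshrinkInv (lam p : ℝ) : ℝ → ℝ := lowerInv (pshrinkBranch lam p) lam

-- `g_p'`, `g_p''` and `g_p'''` on `w > 0`.
def gpDeriv (lam p w : ℝ) : ℝ := (pshrinkInv lam p w - w) / lam

def gpDeriv2 (lam p w : ℝ) : ℝ := ((pshrinkBranchDeriv lam p (pshrinkInv lam p w))⁻¹ - 1) / lam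

def gpDeriv3 (lam p w : ℝ) : ℝ :=
  (1 - p) * (2 - p) * lam ^ (2 - p) * pshrinkInv lam p w ^ (p - 3) /
    (lam * pshrinkBranchDeriv lam p (pshrinkInv lam p w) ^ 3)

section PShrink

variable {lam p : ℝ}

theorem pshrinkBranch_self (hlam : 0 < lam) : pshrinkBranch lam p lam = 0 := by
  rw [pshrinkBranch, ← Real.rpow_add hlam, show 2 - p + (p - 1) = 1 by ring, Real.rpow_one,
    sub_self]

theorem pshrinkBranch_add_sub_le (hlam : 0 ≤ lam) (hp : p ≤ 1) {x y : ℝ} (hx : 0 < x)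
    (hxy : x ≤ y) : pshrinkBranch lam p x + (y - x) ≤ pshrinkBranch lam p y := by
  have hrpow : y ^ (p - 1) ≤ x ^ (p - 1) := Real.rpow_le_rpow_of_nonpos hx hxy (by linarith)
  have := mul_le_mul_of_nonneg_left hrpow (Real.rpow_nonneg hlam (2 - p))
  simp only [pshrinkBranch]
  linarith

theorem continuousOn_pshrinkBranch : ContinuousOn (pshrinkBranch lam p) (Ioi 0) := fun x hx =>
  (continuousAt_id.sub (continuousAt_const.mul
    (Real.continuousAt_rpow_const x (p - 1) (Or.inl (ne_of_gt hx))))).continuousWithinAt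

theorem hasDerivAt_pshrinkBranch {x : ℝ} (hx : 0 < x) :
    HasDerivAt (pshrinkBranch lam p) (pshrinkBranchDeriv lam p x) x := by
  refine ((hasDerivAt_id x).sub ((Real.hasDerivAt_rpow_const (p := p - 1)
    (Or.inl hx.ne')).const_mul (lam ^ (2 - p)))).congr_deriv ?_
  rw [pshrinkBranchDeriv, show p - 1 - 1 = p - 2 by ring]
  ring

theorem hasDerivAt_pshrinkBranchDeriv {x : ℝ} (hx : 0 < x) :
    HasDerivAt (pshrinkBranchDeriv lam p)
      ((1 - p) * lam ^ (2 - p) * ((p - 2) * x ^ (p - 3))) x := by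
  have := ((Real.hasDerivAt_rpow_const (p := p - 2) (Or.inl hx.ne')).const_mul
    ((1 - p) * lam ^ (2 - p))).const_add 1
  rwa [show p - 2 - 1 = p - 3 by ring] at this

theorem pshrinkBranchDeriv_pos (hlam : 0 ≤ lam) (hp : p ≤ 1) {x : ℝ} (hx : 0 < x) :
    0 < pshrinkBranchDeriv lam p x := by
  have : 0 ≤ 1 - p := sub_nonneg.2 hp
  unfold pshrinkBranchDeriv
  positivity

theorem pshrinkFun_eq_pshrinkBranch_max (hlam : 0 < lam) (hp : p ≤ 1) (t : ℝ) :
    pshrinkFun lam p t = pshrinkBranch lam p (max t lam) := by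
  have hlam0 : pshrinkBranch lam p lam = 0 := pshrinkBranch_self hlam
  unfold pshrinkFun
  split_ifs with ht
  · rw [max_eq_right (ht.trans hlam.le), hlam0]
  rw [not_le] at ht
  rcases le_total t lam with htl | htl
  · rw [max_eq_right htl, hlam0]
    refine max_eq_right (show pshrinkBranch lam p t ≤ 0 from ?_)
    linarith [pshrinkBranch_add_sub_le hlam.le hp ht htl]
  · rw [max_eq_left htl]
    refine max_eq_left (show 0 ≤ pshrinkBranch lam p t from ?_)
    linarith [pshrinkBranch_add_sub_le hlam.le hp hlam htl]

theorem continuous_pshrinkFun (hlam : 0 < lam) (hp : p ≤ 1) : Continuous (pshrinkFun lam p) := by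
  rw [funext (pshrinkFun_eq_pshrinkBranch_max hlam hp)]
  exact continuousOn_pshrinkBranch.comp_continuous (continuous_id.max continuous_const)
    fun t => hlam.trans_le (le_max_right t lam)

theorem monotone_pshrinkFun (hlam : 0 < lam) (hp : p ≤ 1) : Monotone (pshrinkFun lam p) := by
  intro x y hxy
  rw [pshrinkFun_eq_pshrinkBranch_max hlam hp, pshrinkFun_eq_pshrinkBranch_max hlam hp]
  have hmax : max x lam ≤ max y lam := max_le_max_right lam hxy
  linarith [pshrinkBranch_add_sub_le hlam.le hp (hlam.trans_le (le_max_right x lam)) hmax]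

theorem hasDerivAt_pf (hlam : 0 < lam) (hp : p ≤ 1) (x : ℝ) :
    HasDerivAt (pf lam p) (pshrinkFun lam p x) x :=
  intervalIntegral.integral_hasDerivAt_right
    ((continuous_pshrinkFun hlam hp).intervalIntegrable _ _)
    ((continuous_pshrinkFun hlam hp).stronglyMeasurableAtFilter _ _)
    (continuous_pshrinkFun hlam hp).continuousAt

theorem continuousOn_Ici_pshrinkBranch (hlam : 0 < lam) :
    ContinuousOn (pshrinkBranch lam p) (Ici lam) :=
  continuousOn_pshrinkBranch.mono fun _ hx => hlam.trans_le hx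

theorem lipschitzWith_pshrinkInv (hlam : 0 < lam) (hp : p ≤ 1) :
    LipschitzWith 1 (pshrinkInv lam p) :=
  lipschitzWith_lowerInv (continuousOn_Ici_pshrinkBranch hlam)
    fun _ _ hx => pshrinkBranch_add_sub_le hlam.le hp (hlam.trans_le hx)

theorem le_pshrinkInv (hlam : 0 < lam) (hp : p ≤ 1) (w : ℝ) : lam ≤ pshrinkInv lam p w :=
  le_lowerInv (continuousOn_Ici_pshrinkBranch hlam)
    (fun _ _ hx => pshrinkBranch_add_sub_le hlam.le hp (hlam.trans_le hx)) w

theorem pshrinkInv_pos (hlam : 0 < lam) (hp : p ≤ 1) (w : ℝ) : 0 < pshrinkInv lam p w :=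
  hlam.trans_le (le_pshrinkInv hlam hp w)

theorem pshrinkInv_zero (hlam : 0 < lam) : pshrinkInv lam p 0 = lam :=
  lowerInv_of_le (pshrinkBranch_self hlam).ge

theorem pshrinkBranch_pshrinkInv (hlam : 0 < lam) (hp : p ≤ 1) {w : ℝ} (hw : 0 ≤ w) :
    pshrinkBranch lam p (pshrinkInv lam p w) = w := by
  rw [pshrinkInv, apply_lowerInv (continuousOn_Ici_pshrinkBranch hlam)
    (fun _ _ hx => pshrinkBranch_add_sub_le hlam.le hp (hlam.trans_le hx)),
    pshrinkBranch_self hlam, max_eq_left hw]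

theorem pshrinkFun_pshrinkInv (hlam : 0 < lam) (hp : p ≤ 1) {w : ℝ} (hw : 0 ≤ w) :
    pshrinkFun lam p (pshrinkInv lam p w) = w := by
  rw [pshrinkFun_eq_pshrinkBranch_max hlam hp, max_eq_left (le_pshrinkInv hlam hp w),
    pshrinkBranch_pshrinkInv hlam hp hw]

theorem hasDerivAt_pshrinkInv (hlam : 0 < lam) (hp : p ≤ 1) {w : ℝ} (hw : 0 < w) :
    HasDerivAt (pshrinkInv lam p) (pshrinkBranchDeriv lam p (pshrinkInv lam p w))⁻¹ w :=
  HasDerivAt.of_local_left_inverse (lipschitzWith_pshrinkInv hlam hp).continuous.continuousAt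
    (hasDerivAt_pshrinkBranch (pshrinkInv_pos hlam hp w))
    (pshrinkBranchDeriv_pos hlam.le hp (pshrinkInv_pos hlam hp w)).ne'
    (eventually_of_mem (Ioi_mem_nhds hw) fun _ hy => pshrinkBranch_pshrinkInv hlam hp hy.le)

-- The supremum defining `f_p*(w)` is attained where `s_{λ,p}(x) = w`, since `f_p` is convex.
theorem pfstar_eq_of_nonneg (hlam : 0 < lam) (hp : p ≤ 1) {w : ℝ} (hw : 0 ≤ w) :
    pfstar lam p w = pshrinkInv lam p w * w - pf lam p (pshrinkInv lam p w) := by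
  have key := (monotone_pshrinkFun hlam hp).mul_sub_le_mul_sub_of_hasDerivAt
    (hasDerivAt_pf hlam hp) (pshrinkInv lam p w)
  rw [pshrinkFun_pshrinkInv hlam hp hw] at key
  refine IsGreatest.csSup_eq ⟨⟨_, (pshrinkInv_pos hlam hp w).le, rfl⟩, ?_⟩
  rintro _ ⟨x, -, rfl⟩
  exact key x

theorem gp_eq_of_nonneg (hlam : 0 < lam) (hp : p ≤ 1) {w : ℝ} (hw : 0 ≤ w) :
    gp lam p w = (pshrinkInv lam p w * w - pf lam p (pshrinkInv lam p w) - w ^ 2 / 2) / lam := by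
  rw [gp, abs_of_nonneg hw, pfstar_eq_of_nonneg hlam hp hw]

theorem hasDerivAt_gp (hlam : 0 < lam) (hp : p ≤ 1) {w : ℝ} (hw : 0 < w) :
    HasDerivAt (gp lam p) (gpDeriv lam p w) w := by
  have hu := hasDerivAt_pshrinkInv hlam hp hw
  have := (((hu.mul (hasDerivAt_id w)).sub ((hasDerivAt_pf hlam hp _).comp w hu)).sub
    ((hasDerivAt_pow 2 w).div_const 2)).div_const lam
  rw [pshrinkFun_pshrinkInv hlam hp hw.le] at this
  refine (this.congr_of_eventuallyEq (eventually_of_mem (Ioi_mem_nhds hw)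
    fun y hy => gp_eq_of_nonneg hlam hp (le_of_lt hy))).congr_deriv ?_
  simp only [gpDeriv, id, Nat.cast_ofNat]
  ring

theorem hasDerivAt_gpDeriv (hlam : 0 < lam) (hp : p ≤ 1) {w : ℝ} (hw : 0 < w) :
    HasDerivAt (gpDeriv lam p) (gpDeriv2 lam p w) w :=
  ((hasDerivAt_pshrinkInv hlam hp hw).sub (hasDerivAt_id w)).div_const lam

theorem hasDerivAt_gpDeriv2 (hlam : 0 < lam) (hp : p ≤ 1) {w : ℝ} (hw : 0 < w) :
    HasDerivAt (gpDeriv2 lam p) (gpDeriv3 lam p w) w := by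
  have hD := (pshrinkBranchDeriv_pos hlam.le hp (pshrinkInv_pos hlam hp w)).ne'
  refine (((((hasDerivAt_pshrinkBranchDeriv (pshrinkInv_pos hlam hp w)).comp w
    (hasDerivAt_pshrinkInv hlam hp hw)).inv hD).sub_const 1).div_const lam).congr_deriv ?_
  rw [gpDeriv3, Function.comp_apply]
  field_simp
  ring

theorem gpDeriv3_pos (hlam : 0 < lam) (hp : p < 1) (w : ℝ) : 0 < gpDeriv3 lam p w := by
  have hu := pshrinkInv_pos hlam hp.le w
  have := pshrinkBranchDeriv_pos hlam.le hp.le hu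
  have : 0 < 1 - p := sub_pos.2 hp
  have : 0 < 2 - p := by linarith
  unfold gpDeriv3
  positivity

theorem continuousAt_gpDeriv3_zero (hlam : 0 < lam) (hp : p ≤ 1) :
    ContinuousAt (gpDeriv3 lam p) 0 := by
  have hcont : ContinuousAt (fun x => (1 - p) * (2 - p) * lam ^ (2 - p) * x ^ (p - 3) /
      (lam * pshrinkBranchDeriv lam p x ^ 3)) lam :=
    (continuousAt_const.mul (Real.continuousAt_rpow_const _ _ (Or.inl hlam.ne'))).div
      (continuousAt_const.mul ((hasDerivAt_pshrinkBranchDeriv hlam).continuousAt.pow 3))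
      (mul_pos hlam (pow_pos (pshrinkBranchDeriv_pos hlam.le hp hlam) 3)).ne'
  exact hcont.comp_of_eq (lipschitzWith_pshrinkInv hlam hp).continuous.continuousAt
    (pshrinkInv_zero hlam)

end PShrink

section ThirdDeriv

variable {lam p : ℝ}

theorem even_gp (lam p : ℝ) : (gp lam p).Even := fun w => by
  simp only [gp, abs_neg, neg_sq]

theorem eqOn_iteratedDeriv_two_gp (hlam : 0 < lam) (hp : p ≤ 1) :
    EqOn (iteratedDeriv 2 (gp lam p)) (gpDeriv2 lam p) (Ioi 0) :=
  eqOn_iteratedDeriv_succ isOpen_Ioi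
    (eqOn_iteratedDeriv_succ isOpen_Ioi (fun _ _ => by rw [iteratedDeriv_zero])
      fun _ hw => hasDerivAt_gp hlam hp hw)
    fun _ hw => hasDerivAt_gpDeriv hlam hp hw

theorem hasDerivAt_iteratedDeriv_two_gp (hlam : 0 < lam) (hp : p ≤ 1) {w : ℝ} (hw : 0 < w) :
    HasDerivAt (iteratedDeriv 2 (gp lam p)) (gpDeriv3 lam p w) w :=
  hasDerivAt_iteratedDeriv_of_eqOn isOpen_Ioi (eqOn_iteratedDeriv_two_gp hlam hp) hw
    (hasDerivAt_gpDeriv2 hlam hp hw)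

theorem iteratedDeriv_three_gp (hlam : 0 < lam) (hp : p ≤ 1) {w : ℝ} (hw : 0 < w) :
    iteratedDeriv 3 (gp lam p) w = gpDeriv3 lam p w :=
  eqOn_iteratedDeriv_succ isOpen_Ioi (eqOn_iteratedDeriv_two_gp hlam hp)
    (fun _ hw => hasDerivAt_gpDeriv2 hlam hp hw) hw

theorem iteratedDeriv_three_gp_neg (w : ℝ) :
    iteratedDeriv 3 (gp lam p) (-w) = -iteratedDeriv 3 (gp lam p) w := by
  rw [(even_gp lam p).iteratedDeriv_neg 3 w]
  norm_num

theorem differentiableAt_iteratedDeriv_two_gp (hlam : 0 < lam) (hp : p ≤ 1) {w : ℝ}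
    (hw : w ≠ 0) : DifferentiableAt ℝ (iteratedDeriv 2 (gp lam p)) w := by
  rcases hw.lt_or_gt with hw | hw
  · have heven : (fun x => iteratedDeriv 2 (gp lam p) (-x)) = iteratedDeriv 2 (gp lam p) :=
      funext fun x => by simpa using (even_gp lam p).iteratedDeriv_neg 2 x
    rw [← heven]
    exact (hasDerivAt_iteratedDeriv_two_gp hlam hp (neg_pos.2 hw)).differentiableAt.comp w
      differentiableAt_id.neg
  · exact (hasDerivAt_iteratedDeriv_two_gp hlam hp hw).differentiableAt

theorem tendsto_iteratedDeriv_three_gp_nhdsGT_zero (hlam : 0 < lam) (hp : p ≤ 1) :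
    Tendsto (iteratedDeriv 3 (gp lam p)) (𝓝[>] 0) (𝓝 (gpDeriv3 lam p 0)) :=
  ((continuousAt_gpDeriv3_zero hlam hp).tendsto.mono_left nhdsWithin_le_nhds).congr'
    (eventually_nhdsWithin_of_forall fun _ hw => (iteratedDeriv_three_gp hlam hp hw).symm)

end ThirdDeriv

/-- sign of the third derivative of `g_p`. -/
theorem stmt16 (lam p : ℝ) (hlam : 0 < lam) (hp : p < 1) :
    (∀ w : ℝ, w ≠ 0 → DifferentiableAt ℝ (iteratedDeriv 2 (gp lam p)) w) ∧
    (∀ w : ℝ, 0 < w → 0 < iteratedDeriv 3 (gp lam p) w) ∧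
    (∀ w : ℝ, w < 0 → iteratedDeriv 3 (gp lam p) w < 0) ∧
    (∃ L : ℝ, 0 < L ∧ Filter.Tendsto (iteratedDeriv 3 (gp lam p))
      (nhdsWithin 0 (Set.Ioi 0)) (nhds L)) ∧
    (∃ L' : ℝ, L' < 0 ∧ Filter.Tendsto (iteratedDeriv 3 (gp lam p))
      (nhdsWithin 0 (Set.Iio 0)) (nhds L')) := by
  have hpos : ∀ w, 0 < w → 0 < iteratedDeriv 3 (gp lam p) w := fun w hw => by
    rw [iteratedDeriv_three_gp hlam hp.le hw]
    exact gpDeriv3_pos hlam hp w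
  have hright := tendsto_iteratedDeriv_three_gp_nhdsGT_zero hlam hp.le
  have hL := gpDeriv3_pos hlam hp 0
  refine ⟨fun w hw => differentiableAt_iteratedDeriv_two_gp hlam hp.le hw, hpos, fun w hw => ?_,
    ⟨_, hL, hright⟩, ⟨_, neg_lt_zero.2 hL, ?_⟩⟩
  · rw [← neg_neg w, iteratedDeriv_three_gp_neg, neg_lt_zero]
    exact hpos (-w) (neg_pos.2 hw)
  · have hneg := tendsto_neg_nhdsLT_neg (a := (0 : ℝ))
    rw [neg_zero] at hneg
    refine (hright.comp hneg).neg.congr fun w => ?_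
    rw [Function.comp_apply, iteratedDeriv_three_gp_neg, neg_neg]

end
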